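/- arXiv:0810.0222 — 6 statements merged into one kernel-verified Lean document; each statement's English description precedes it below -/
import Mathlib

section
/- For every natural number u, setting x=(u+1)(2u+5), y=(u+2)(2u²+8u+7), z=(2u²+7u+4)(2u²+7u+7)/2, p=2u³+12u²+24u+15, q=(4u⁴+28u³+73u²+87u+40)/2, r=(4u⁴+28u³+71u²+77u+30)/2 yields natural numbers satisfying t_x+t_y=t_p, t_y+t_z=t_q, t_z+t_x=t_r. -/
def tri (n : ℕ) : ℕ := n * (n + 1) / 2

lemma tri_add (a b c : ℕ) (h : a*(a+1) + b*(b+1) = c*(c+1)) :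
    tri a + tri b = tri c := by
  unfold tri
  obtain ⟨x, hx⟩ := (Nat.even_mul_succ_self a)
  obtain ⟨y, hy⟩ := (Nat.even_mul_succ_self b)
  obtain ⟨z, hz⟩ := (Nat.even_mul_succ_self c)
  omega

lemma half_eq (a b : ℕ) (h : a = 2*b) : a/2 = b := by omega

theorem stmt_1 (u : ℕ) :
    2 ∣ (2*u^2 + 7*u + 4) * (2*u^2 + 7*u + 7) ∧
    2 ∣ 4*u^4 + 28*u^3 + 73*u^2 + 87*u + 40 ∧
    2 ∣ 4*u^4 + 28*u^3 + 71*u^2 + 77*u + 30 ∧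
    tri ((u+1)*(2*u+5)) + tri ((u+2)*(2*u^2+8*u+7)) = tri (2*u^3+12*u^2+24*u+15) ∧
    tri ((u+2)*(2*u^2+8*u+7)) + tri ((2*u^2+7*u+4)*(2*u^2+7*u+7)/2)
      = tri ((4*u^4+28*u^3+73*u^2+87*u+40)/2) ∧
    tri ((2*u^2+7*u+4)*(2*u^2+7*u+7)/2) + tri ((u+1)*(2*u+5))
      = tri ((4*u^4+28*u^3+71*u^2+77*u+30)/2) := by
  rcases Nat.even_or_odd u with ⟨k, rfl⟩ | ⟨k, rfl⟩
  · have hz : (2*(k+k)^2+7*(k+k)+4)*(2*(k+k)^2+7*(k+k)+7)/2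
        = 32*k^4+112*k^3+142*k^2+77*k+14 := half_eq _ _ (by ring)
    have hq : (4*(k+k)^4+28*(k+k)^3+73*(k+k)^2+87*(k+k)+40)/2
        = 32*k^4+112*k^3+146*k^2+87*k+20 := half_eq _ _ (by ring)
    have hr : (4*(k+k)^4+28*(k+k)^3+71*(k+k)^2+77*(k+k)+30)/2
        = 32*k^4+112*k^3+142*k^2+77*k+15 := half_eq _ _ (by ring)
    refine ⟨⟨32*k^4+112*k^3+142*k^2+77*k+14, by ring⟩,
      ⟨32*k^4+112*k^3+146*k^2+87*k+20, by ring⟩,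
      ⟨32*k^4+112*k^3+142*k^2+77*k+15, by ring⟩,
      tri_add _ _ _ (by ring), ?_, ?_⟩
    · rw [hz, hq]; exact tri_add _ _ _ (by ring)
    · rw [hz, hr]; exact tri_add _ _ _ (by ring)
  · have hz : (2*(2*k+1)^2+7*(2*k+1)+4)*(2*(2*k+1)^2+7*(2*k+1)+7)/2
        = 32*k^4+176*k^3+358*k^2+319*k+104 := half_eq _ _ (by ring)
    have hq : (4*(2*k+1)^4+28*(2*k+1)^3+73*(2*k+1)^2+87*(2*k+1)+40)/2
        = 32*k^4+176*k^3+362*k^2+333*k+116 := half_eq _ _ (by ring)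
    have hr : (4*(2*k+1)^4+28*(2*k+1)^3+71*(2*k+1)^2+77*(2*k+1)+30)/2
        = 32*k^4+176*k^3+358*k^2+319*k+105 := half_eq _ _ (by ring)
    refine ⟨⟨32*k^4+176*k^3+358*k^2+319*k+104, by ring⟩,
      ⟨32*k^4+176*k^3+362*k^2+333*k+116, by ring⟩,
      ⟨32*k^4+176*k^3+358*k^2+319*k+105, by ring⟩,
      tri_add _ _ _ (by ring), ?_, ?_⟩
    · rw [hz, hq]; exact tri_add _ _ _ (by ring)
    · rw [hz, hr]; exact tri_add _ _ _ (by ring)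
end

section
/- For every natural number u, setting x=(u+3)(2u+3), y=(u+1)(2u²+10u+13), z=(2u²+9u+8)(2u²+9u+11)/2, p=2u³+12u²+24u+16, q=(4u⁴+36u³+121u²+177u+92)/2, r=(u+2)(u+3)(2u+3)(2u+5)/2 yields natural numbers satisfying t_x+t_y=t_p, t_y+t_z=t_q, t_z+t_x=t_r. -/
lemma two_mul_tri (n : ℕ) : 2 * tri n = n * (n + 1) := by
  unfold tri
  exact Nat.mul_div_cancel' (even_iff_two_dvd.mp (Nat.even_mul_succ_self n))

lemma tri_add_tri {a b c : ℕ} (h : a * (a + 1) + b * (b + 1) = c * (c + 1)) :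
    tri a + tri b = tri c := by
  apply Nat.eq_of_mul_eq_mul_left (show 0 < 2 by norm_num)
  rw [mul_add, two_mul_tri, two_mul_tri, two_mul_tri, h]

theorem stmt_2 (u : ℕ) :
    2 ∣ (2*u^2 + 9*u + 8) * (2*u^2 + 9*u + 11) ∧
    2 ∣ 4*u^4 + 36*u^3 + 121*u^2 + 177*u + 92 ∧
    2 ∣ (u+2)*(u+3)*(2*u+3)*(2*u+5) ∧
    tri ((u+3)*(2*u+3)) + tri ((u+1)*(2*u^2+10*u+13)) = tri (2*u^3+12*u^2+24*u+16) ∧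
    tri ((u+1)*(2*u^2+10*u+13)) + tri ((2*u^2+9*u+8)*(2*u^2+9*u+11)/2)
      = tri ((4*u^4+36*u^3+121*u^2+177*u+92)/2) ∧
    tri ((2*u^2+9*u+8)*(2*u^2+9*u+11)/2) + tri ((u+3)*(2*u+3))
      = tri ((u+2)*(u+3)*(2*u+3)*(2*u+5)/2) := by
  rcases Nat.even_or_odd u with ⟨k, rfl⟩ | ⟨k, rfl⟩
  · have h1 : (2*(k+k)^2 + 9*(k+k) + 8) * (2*(k+k)^2 + 9*(k+k) + 11)
        = 2 * ((4*k^2+9*k+4)*(8*k^2+18*k+11)) := by ring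
    have h2 : 4*(k+k)^4 + 36*(k+k)^3 + 121*(k+k)^2 + 177*(k+k) + 92
        = 2 * (32*k^4+144*k^3+242*k^2+177*k+46) := by ring
    have h3 : ((k+k)+2)*((k+k)+3)*(2*(k+k)+3)*(2*(k+k)+5)
        = 2 * ((k+1)*(2*k+3)*(4*k+3)*(4*k+5)) := by ring
    refine ⟨⟨_, h1⟩, ⟨_, h2⟩, ⟨_, h3⟩, tri_add_tri (by ring), ?_, ?_⟩ <;>
      (simp only [h1, h2, h3]; rw [Nat.mul_div_cancel_left _ two_pos, Nat.mul_div_cancel_left _ two_pos]) <;>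
      exact tri_add_tri (by ring)
  · have h1 : (2*(2*k+1)^2 + 9*(2*k+1) + 8) * (2*(2*k+1)^2 + 9*(2*k+1) + 11)
        = 2 * ((8*k^2+26*k+19)*(4*k^2+13*k+11)) := by ring
    have h2 : 4*(2*k+1)^4 + 36*(2*k+1)^3 + 121*(2*k+1)^2 + 177*(2*k+1) + 92
        = 2 * (32*k^4+208*k^3+506*k^2+543*k+215) := by ring
    have h3 : ((2*k+1)+2)*((2*k+1)+3)*(2*(2*k+1)+3)*(2*(2*k+1)+5)
        = 2 * ((2*k+3)*(k+2)*(4*k+5)*(4*k+7)) := by ring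
    refine ⟨⟨_, h1⟩, ⟨_, h2⟩, ⟨_, h3⟩, tri_add_tri (by ring), ?_, ?_⟩ <;>
      (simp only [h1, h2, h3]; rw [Nat.mul_div_cancel_left _ two_pos, Nat.mul_div_cancel_left _ two_pos]) <;>
      exact tri_add_tri (by ring)
end

section
/- For every nonzero integer a, the system f(x)+f(y)=f(p), f(y)+f(z)=f(q), f(z)+f(x)=f(r) with f(X)=X(X+a) has infinitely many solutions in positive integers (x,y,z,p,q,r) with x<y<z when a>0. -/
theorem stmt_6 (a : ℤ) (ha : 0 < a) (f : ℤ → ℤ) (hf : ∀ X, f X = X * (X + a)) :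
    {s : ℤ × ℤ × ℤ × ℤ × ℤ × ℤ |
      0 < s.1 ∧ s.1 < s.2.1 ∧ s.2.1 < s.2.2.1 ∧
      0 < s.2.2.2.1 ∧ 0 < s.2.2.2.2.1 ∧ 0 < s.2.2.2.2.2 ∧
      f s.1 + f s.2.1 = f s.2.2.2.1 ∧
      f s.2.1 + f s.2.2.1 = f s.2.2.2.2.1 ∧
      f s.2.2.1 + f s.1 = f s.2.2.2.2.2}.Infinite := by
  apply Set.infinite_of_injective_forall_mem
    (f := fun n : ℕ =>
      (let t : ℤ := (n : ℤ) + 1;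
       (a * (8*t^2 + 6*t),
        a * (16*t^3 + 24*t^2 + 10*t + 1),
        a * (32*t^4 + 48*t^3 + 22*t^2 + 3*t - 1),
        a * (16*t^3 + 24*t^2 + 12*t + 1),
        a * (32*t^4 + 48*t^3 + 26*t^2 + 9*t + 1),
        a * (32*t^4 + 48*t^3 + 22*t^2 + 3*t))))
  case hi =>
    intro n1 n2 h
    simp only [Prod.mk.injEq] at h
    have h1 := h.1
    set t1 : ℤ := (n1 : ℤ) + 1 with h1def
    set t2 : ℤ := (n2 : ℤ) + 1 with h2def
    have ht1 : (1 : ℤ) ≤ t1 := by omega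
    have ht2 : (1 : ℤ) ≤ t2 := by omega
    have h2 : 8*t1^2 + 6*t1 = 8*t2^2 + 6*t2 :=
      mul_left_cancel₀ (ne_of_gt ha) h1
    have : t1 = t2 := by
      rcases lt_trichotomy t1 t2 with hlt | heq | hgt
      · nlinarith
      · exact heq
      · nlinarith
    have : (n1 : ℤ) = (n2 : ℤ) := by omega
    exact_mod_cast this
  case hf =>
    intro n
    set t : ℤ := (n : ℤ) + 1 with htdef
    have ht : (1 : ℤ) ≤ t := by omega
    simp only [Set.mem_setOf_eq]
    refine ⟨?_, ?_, ?_, ?_, ?_, ?_, ?_, ?_, ?_⟩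
    · exact mul_pos ha (by nlinarith)
    · exact mul_lt_mul_of_pos_left (by nlinarith) ha
    · exact mul_lt_mul_of_pos_left (by nlinarith) ha
    · exact mul_pos ha (by nlinarith)
    · exact mul_pos ha (by nlinarith)
    · exact mul_pos ha (by nlinarith)
    · simp only [hf]; ring
    · simp only [hf]; ring
    · simp only [hf]; ring
end

section
/- Let u,v,w be rational numbers with D := (1-u²)(v²-1)(w²-1)+8uvw ≠ 0 and u,v,w ≠ 0. Define x = (u-1)w(1+u-2v+2uv+v²+uv²+(-1-u+v²+uv²)w)/D, y = u(v-1)(1-u+v-uv+(-2+2v)w+(1+u+v+uv)w²)/D, z = v(w-1)(1-2u+u²-v+u²v+(1+2u+u²-v+u²v)w)/D, p = (ux+y)/u, q = (vy+z)/v, r = (wz+x)/w. Then t_x+t_y=t_p, t_y+t_z=t_q, t_z+t_x=t_r, where t_s = s(s+1)/2. -/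
/-! The relation `t_x + t_y = t_(x + y/u)` follows from the *linear* equation
`2 u x + (1 - u²) y = u (u - 1)` (and is equivalent to it when `y ≠ 0`). The three such
equations for the pairs `(x, y)`, `(y, z)`, `(z, x)` form a cyclic linear system whose
determinant is `D`, and `x, y, z` are its solution by Cramer's rule. -/

def triQ (s : ℚ) : ℚ := s * (s + 1) / 2

theorem triQ_add_eq_triQ_of_linear {u x y : ℚ} (hu : u ≠ 0)
    (h : 2 * u * x + (1 - u ^ 2) * y = u * (u - 1)) :
    triQ x + triQ y = triQ ((u * x + y) / u) := by
  unfold triQ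
  field_simp
  linear_combination (-y) * h

section CyclicSystem

variable {K : Type*} [Field K]

/-- Determinant of the cyclic system `2 u x + (1 - u²) y = u (u - 1)`, `2 v y + (1 - v²) z = v (v - 1)`,
`2 w z + (1 - w²) x = w (w - 1)`. -/
def cyclicDet (u v w : K) : K := (1 - u ^ 2) * (1 - v ^ 2) * (1 - w ^ 2) + 8 * u * v * w

/-- Cramer numerator of `x` in the cyclic system; those of `y` and `z` are its cyclic shifts. -/
def cyclicNum (u v w : K) : K :=
  (u - 1) * w * (1 + u - 2 * v + 2 * u * v + v ^ 2 + u * v ^ 2 + (-1 - u + v ^ 2 + u * v ^ 2) * w)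

theorem cyclicDet_rotate (u v w : K) : cyclicDet v w u = cyclicDet u v w := by
  unfold cyclicDet; ring

theorem cyclicNum_linear (u v w : K) :
    2 * u * cyclicNum u v w + (1 - u ^ 2) * cyclicNum v w u = u * (u - 1) * cyclicDet u v w := by
  unfold cyclicNum cyclicDet; ring

theorem cyclicNum_div_linear {u v w : K} (hD : cyclicDet u v w ≠ 0) :
    2 * u * (cyclicNum u v w / cyclicDet u v w) + (1 - u ^ 2) * (cyclicNum v w u / cyclicDet u v w)
      = u * (u - 1) := by
  field_simp
  linear_combination cyclicNum_linear u v w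

end CyclicSystem

theorem stmt_8 (u v w : ℚ) (hu : u ≠ 0) (hv : v ≠ 0) (hw : w ≠ 0)
    (D : ℚ) (hD : D = (1 - u^2) * (v^2 - 1) * (w^2 - 1) + 8*u*v*w) (hD0 : D ≠ 0)
    (x y z p q r : ℚ)
    (hx : x = (u-1)*w*(1+u-2*v+2*u*v+v^2+u*v^2+(-1-u+v^2+u*v^2)*w) / D)
    (hy : y = u*(v-1)*(1-u+v-u*v+(-2+2*v)*w+(1+u+v+u*v)*w^2) / D)
    (hz : z = v*(w-1)*(1-2*u+u^2-v+u^2*v+(1+2*u+u^2-v+u^2*v)*w) / D)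
    (hp : p = (u*x + y) / u) (hq : q = (v*y + z) / v) (hr : r = (w*z + x) / w) :
    triQ x + triQ y = triQ p ∧ triQ y + triQ z = triQ q ∧
    triQ z + triQ x = triQ r := by
  have hDet : D = cyclicDet u v w := by rw [hD, cyclicDet]; ring
  have hDet' : D = cyclicDet v w u := hDet.trans (cyclicDet_rotate u v w).symm
  have hDet'' : D = cyclicDet w u v := hDet'.trans (cyclicDet_rotate v w u).symm
  have hx' : x = cyclicNum u v w / D := by rw [hx, cyclicNum]
  have hy' : y = cyclicNum v w u / D := by rw [hy, cyclicNum]; ring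
  have hz' : z = cyclicNum w u v / D := by rw [hz, cyclicNum]; ring
  subst hp hq hr
  refine ⟨triQ_add_eq_triQ_of_linear hu ?_, triQ_add_eq_triQ_of_linear hv ?_,
    triQ_add_eq_triQ_of_linear hw ?_⟩
  · rw [hx', hy', hDet]; exact cyclicNum_div_linear (hDet ▸ hD0)
  · rw [hy', hz', hDet']; exact cyclicNum_div_linear (hDet' ▸ hD0)
  · rw [hz', hx', hDet'']; exact cyclicNum_div_linear (hDet'' ▸ hD0)
end

section
/- The rational functions x,y,z,p,q,r of Theorem 2 satisfy the linear system y=u(p-x), u(y+1)=p+x+1, z=v(q-y), v(z+1)=q+y+1, x=w(r-z), w(x+1)=r+z+1, for all rationals u,v,w with (1-u²)(v²-1)(w²-1)+8uvw ≠ 0 and u,v,w ≠ 0. -/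
/-!
Each pair of equations is one row of the linear system solved by `x, y, z`. Once `p = x + y/u`
is substituted, the first equation of the pair is an identity, and the second becomes the linear
relation `(u² - 1) y + u (u - 1) = 2 u x`. Multiplied by `D`, each of the three such relations
is a polynomial identity in `u, v, w`.
-/

section LinearRow

variable {K : Type*} [Field K] {u x y p : K}

theorem eq_mul_sub_of_eq_div (hu : u ≠ 0) (hp : p = (u * x + y) / u) : y = u * (p - x) := by
  subst hp
  field_simp
  ring

theorem mul_add_one_eq_iff_of_eq_div (hu : u ≠ 0) (hp : p = (u * x + y) / u) :
    u * (y + 1) = p + x + 1 ↔ (u ^ 2 - 1) * y + u * (u - 1) = 2 * u * x := by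
  subst hp
  rw [← sub_eq_zero, ← sub_eq_zero (a := (u ^ 2 - 1) * y + _)]
  have : u * (y + 1) - ((u * x + y) / u + x + 1)
      = ((u ^ 2 - 1) * y + u * (u - 1) - 2 * u * x) / u := by
    field_simp
    ring
  rw [this, div_eq_zero_iff, or_iff_left hu]

end LinearRow

theorem stmt_9 (u v w : ℚ) (hu : u ≠ 0) (hv : v ≠ 0) (hw : w ≠ 0)
    (D : ℚ) (hD : D = (1 - u^2) * (v^2 - 1) * (w^2 - 1) + 8*u*v*w) (hD0 : D ≠ 0)
    (x y z p q r : ℚ)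
    (hx : x = (u-1)*w*(1+u-2*v+2*u*v+v^2+u*v^2+(-1-u+v^2+u*v^2)*w) / D)
    (hy : y = u*(v-1)*(1-u+v-u*v+(-2+2*v)*w+(1+u+v+u*v)*w^2) / D)
    (hz : z = v*(w-1)*(1-2*u+u^2-v+u^2*v+(1+2*u+u^2-v+u^2*v)*w) / D)
    (hp : p = (u*x + y) / u) (hq : q = (v*y + z) / v) (hr : r = (w*z + x) / w) :
    y = u * (p - x) ∧ u * (y + 1) = p + x + 1 ∧
    z = v * (q - y) ∧ v * (z + 1) = q + y + 1 ∧
    x = w * (r - z) ∧ w * (x + 1) = r + z + 1 := by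
  rw [mul_add_one_eq_iff_of_eq_div hu hp, mul_add_one_eq_iff_of_eq_div hv hq,
    mul_add_one_eq_iff_of_eq_div hw hr]
  refine ⟨eq_mul_sub_of_eq_div hu hp, ?_, eq_mul_sub_of_eq_div hv hq, ?_,
    eq_mul_sub_of_eq_div hw hr, ?_⟩ <;>
  · subst x y z
    field_simp
    rw [hD]
    ring
end

section
/- The point P = (5736, 252720) has infinite order on the elliptic curve Y² = X³ − 28802736·X + 40355763840 over ℚ. -/
open WeierstrassCurve

def E : Affine ℚ := { a₁ := 0, a₂ := 0, a₃ := 0, a₄ := -28802736, a₆ := 40355763840 }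

/-!
For a root `e` of the cubic, `P ↦ x(P) - e` defines a homomorphism `E(ℚ) → ℚˣ/ℚˣ²`: a line
`y = ℓ(x)` meets the curve in three points whose abscissae satisfy
`(x₁ - e)(x₂ - e)(x₃ - e) = ℓ(e)²`. For `e = 1524` it sends `P` to the class of
`4212 = 18² · 13`, a non-square, and it vanishes on `2E(ℚ)`. If `P` had finite order `2^k m`
with `m` odd, `m • P` would have order `2^k` and the same image. But the points of order 2 have
`x ∈ {-5964, 1524, 4440}`, and those of order 4 halve the only one in the kernel, `(4440, 0)`,
so `x ∈ {9948, -1068}`. None of these has image `[13]`, and none of order 4 has image `1`.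
-/

open Polynomial

abbrev SquareClasses (K : Type*) [Field K] := Kˣ ⧸ (powMonoidHom 2 : Kˣ →* Kˣ).range

section SquareClasses

variable {K : Type*} [Field K]

def squareClass (a : K) (ha : a ≠ 0) : SquareClasses K := QuotientGroup.mk (Units.mk0 a ha)

lemma squareClass_mul {a b : K} (ha : a ≠ 0) (hb : b ≠ 0) :
    squareClass a ha * squareClass b hb = squareClass (a * b) (mul_ne_zero ha hb) := by
  rw [squareClass, squareClass, squareClass, Units.mk0_mul, QuotientGroup.mk_mul]

lemma squareClass_eq_one_iff {a : K} (ha : a ≠ 0) : squareClass a ha = 1 ↔ IsSquare a := by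
  rw [squareClass, QuotientGroup.eq_one_iff]
  constructor
  · rintro ⟨u, hu⟩
    have hu' := congrArg Units.val hu
    simp only [powMonoidHom_apply, Units.val_pow_eq_pow_val, Units.val_mk0] at hu'
    exact ⟨u, by rw [← hu', sq]⟩
  · rintro ⟨r, rfl⟩
    exact ⟨Units.mk0 r (left_ne_zero_of_mul ha), Units.ext <| by simp [sq]⟩

lemma SquareClasses.mul_self_eq_one (g : SquareClasses K) : g * g = 1 := by
  induction g using QuotientGroup.induction_on with
  | H u => exact (QuotientGroup.eq_one_iff _).mpr ⟨u, by simp [sq]⟩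

lemma squareClass_eq_squareClass_iff {a b : K} (ha : a ≠ 0) (hb : b ≠ 0) :
    squareClass a ha = squareClass b hb ↔ IsSquare (a * b) := by
  rw [← squareClass_eq_one_iff (mul_ne_zero ha hb), ← squareClass_mul, mul_eq_one_iff_eq_inv,
    inv_eq_of_mul_eq_one_right (SquareClasses.mul_self_eq_one _)]

lemma SquareClasses.two_nsmul_eq_zero (b : Additive (SquareClasses K)) : 2 • b = 0 := by
  rw [two_nsmul]
  exact SquareClasses.mul_self_eq_one b.toMul

end SquareClasses

namespace WeierstrassCurve.Affine

variable {K : Type*} [Field K] [DecidableEq K] {W : Affine K} {e x₁ x₂ y₁ y₂ : K}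

-- At `x = e` the class of `x - e` is replaced by that of `f'(e) = (e - e')(e - e'')`.
variable (W) in
def descentValue (e x : K) : K := if x = e then 3 * e ^ 2 + 2 * W.a₂ * e + W.a₄ else x - e

lemma descentValue_ne_zero (ha₁ : W.a₁ = 0) (ha₃ : W.a₃ = 0) (he : W.Nonsingular e 0) (x : K) :
    W.descentValue e x ≠ 0 := by
  unfold descentValue
  split_ifs with hx
  · rw [nonsingular_iff, ha₁, ha₃] at he
    simpa [eq_comm] using he.2
  · exact sub_ne_zero.mpr hx

lemma linePolynomial_sq_sub_eq (ha₁ : W.a₁ = 0) (ha₃ : W.a₃ = 0) (h₁ : W.Equation x₁ y₁)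
    (h₂ : W.Equation x₂ y₂) (hxy : ¬(x₁ = x₂ ∧ y₁ = W.negY x₂ y₂)) :
    linePolynomial x₁ y₁ (W.slope x₁ x₂ y₁ y₂) ^ 2 -
        (X ^ 3 + C W.a₂ * X ^ 2 + C W.a₄ * X + C W.a₆) =
      -((X - C x₁) * (X - C x₂) * (X - C (W.addX x₁ x₂ (W.slope x₁ x₂ y₁ y₂)))) := by
  rw [← addPolynomial_slope h₁ h₂ hxy, addPolynomial, polynomial, ha₁, ha₃]
  simp

lemma sq_line_eq_mul_sub (ha₁ : W.a₁ = 0) (ha₃ : W.a₃ = 0) (he : W.Equation e 0)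
    (h₁ : W.Equation x₁ y₁) (h₂ : W.Equation x₂ y₂) (hxy : ¬(x₁ = x₂ ∧ y₁ = W.negY x₂ y₂)) :
    (W.slope x₁ x₂ y₁ y₂ * (e - x₁) + y₁) ^ 2 =
      (x₁ - e) * (x₂ - e) * (W.addX x₁ x₂ (W.slope x₁ x₂ y₁ y₂) - e) := by
  have h := congrArg (eval e) (linePolynomial_sq_sub_eq ha₁ ha₃ h₁ h₂ hxy)
  rw [equation_iff, ha₁, ha₃] at he
  simp only [linePolynomial, eval_sub, eval_add, eval_mul, eval_pow, eval_C, eval_X, eval_neg] at h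
  linear_combination h - he

-- Differentiate the identity of `linePolynomial_sq_sub_eq` at `e`, where the line now vanishes.
lemma cubic_deriv_eq_of_mul_sub_eq_zero (ha₁ : W.a₁ = 0) (ha₃ : W.a₃ = 0) (he : W.Equation e 0)
    (h₁ : W.Equation x₁ y₁) (h₂ : W.Equation x₂ y₂) (hxy : ¬(x₁ = x₂ ∧ y₁ = W.negY x₂ y₂))
    (h0 : (x₁ - e) * (x₂ - e) * (W.addX x₁ x₂ (W.slope x₁ x₂ y₁ y₂) - e) = 0) :
    3 * e ^ 2 + 2 * W.a₂ * e + W.a₄ = (x₂ - e) * (W.addX x₁ x₂ (W.slope x₁ x₂ y₁ y₂) - e) +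
      (x₁ - e) * (W.addX x₁ x₂ (W.slope x₁ x₂ y₁ y₂) - e) + (x₁ - e) * (x₂ - e) := by
  have hℓ : W.slope x₁ x₂ y₁ y₂ * (e - x₁) + y₁ = 0 :=
    pow_eq_zero_iff two_ne_zero |>.mp ((sq_line_eq_mul_sub ha₁ ha₃ he h₁ h₂ hxy).trans h0)
  have h := congrArg (fun p => eval e (derivative p)) (linePolynomial_sq_sub_eq ha₁ ha₃ h₁ h₂ hxy)
  simp only [linePolynomial, derivative_sub, derivative_add, derivative_mul, derivative_pow,
    derivative_C, derivative_X, derivative_neg, eval_sub, eval_add, eval_mul, eval_pow, eval_C,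
    eval_X, eval_neg, eval_one, eval_zero] at h
  linear_combination (norm := ring_nf) -h + 2 * W.slope x₁ x₂ y₁ y₂ * hℓ

-- If some `uᵢ` vanishes, `hderiv` makes `d` the product of the other two, so the product is `d²`.
lemma isSquare_ite_mul {d u₁ u₂ u₃ : K} (hd : d ≠ 0) (hsq : IsSquare (u₁ * u₂ * u₃))
    (hderiv : u₁ * u₂ * u₃ = 0 → d = u₂ * u₃ + u₁ * u₃ + u₁ * u₂) :
    IsSquare ((if u₁ = 0 then d else u₁) * (if u₂ = 0 then d else u₂) *
      (if u₃ = 0 then d else u₃)) := by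
  by_cases h0 : u₁ * u₂ * u₃ = 0
  · have hd' := hderiv h0
    split_ifs with h₁ h₂ h₃ h₃ h₂ h₃ h₃ <;> simp_all
    all_goals exact ⟨d, by rw [hd']; ring⟩
  · simp_all

lemma descentValue_eq_ite (e x : K) : W.descentValue e x =
    if x - e = 0 then 3 * e ^ 2 + 2 * W.a₂ * e + W.a₄ else x - e := by
  simp only [descentValue, sub_eq_zero]

lemma isSquare_descentValue_mul_addX (ha₁ : W.a₁ = 0) (ha₃ : W.a₃ = 0) (he : W.Nonsingular e 0)
    (h₁ : W.Equation x₁ y₁) (h₂ : W.Equation x₂ y₂) (hxy : ¬(x₁ = x₂ ∧ y₁ = W.negY x₂ y₂)) :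
    IsSquare (W.descentValue e x₁ * W.descentValue e x₂ *
      W.descentValue e (W.addX x₁ x₂ (W.slope x₁ x₂ y₁ y₂))) := by
  simp only [descentValue_eq_ite]
  refine isSquare_ite_mul ?_ ⟨_, (sq_line_eq_mul_sub ha₁ ha₃ he.1 h₁ h₂ hxy).symm.trans (sq _)⟩
    (cubic_deriv_eq_of_mul_sub_eq_zero ha₁ ha₃ he.1 h₁ h₂ hxy)
  simpa [descentValue] using descentValue_ne_zero ha₁ ha₃ he e

variable (W) in
noncomputable def descentFun (ha₁ : W.a₁ = 0) (ha₃ : W.a₃ = 0) (he : W.Nonsingular e 0) :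
    W.Point → SquareClasses K
  | 0 => 1
  | @Point.some _ _ _ x _ _ => squareClass (W.descentValue e x) (descentValue_ne_zero ha₁ ha₃ he x)

lemma descentFun_zero (ha₁ : W.a₁ = 0) (ha₃ : W.a₃ = 0) (he : W.Nonsingular e 0) :
    W.descentFun ha₁ ha₃ he 0 = 1 :=
  rfl

lemma descentFun_add (ha₁ : W.a₁ = 0) (ha₃ : W.a₃ = 0) (he : W.Nonsingular e 0)
    (P Q : W.Point) :
    W.descentFun ha₁ ha₃ he (P + Q) = W.descentFun ha₁ ha₃ he P * W.descentFun ha₁ ha₃ he Q := by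
  rcases P with _ | @⟨x₁, y₁, h₁⟩
  · rw [← Point.zero_def, zero_add, descentFun_zero]
    exact (one_mul (W.descentFun ha₁ ha₃ he Q)).symm
  rcases Q with _ | @⟨x₂, y₂, h₂⟩
  · rw [← Point.zero_def, add_zero, descentFun_zero]
    exact (mul_one (W.descentFun ha₁ ha₃ he _)).symm
  by_cases hxy : x₁ = x₂ ∧ y₁ = W.negY x₂ y₂
  · rw [Point.add_of_Y_eq hxy.1 hxy.2]
    simp only [descentFun, hxy.1]
    exact (SquareClasses.mul_self_eq_one _).symm
  · rw [Point.add_some hxy]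
    simp only [descentFun]
    rw [squareClass_mul, squareClass_eq_squareClass_iff, mul_comm]
    exact isSquare_descentValue_mul_addX ha₁ ha₃ he h₁.1 h₂.1 hxy

variable (W) in
noncomputable def descentHom (ha₁ : W.a₁ = 0) (ha₃ : W.a₃ = 0) (he : W.Nonsingular e 0) :
    W.Point →+ Additive (SquareClasses K) where
  toFun P := .ofMul (W.descentFun ha₁ ha₃ he P)
  map_zero' := rfl
  map_add' P Q := congrArg Additive.ofMul (descentFun_add ha₁ ha₃ he P Q)

lemma descentHom_some (ha₁ : W.a₁ = 0) (ha₃ : W.a₃ = 0) (he : W.Nonsingular e 0) {x y : K}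
    (h : W.Nonsingular x y) : W.descentHom ha₁ ha₃ he (.some x y h) =
      .ofMul (squareClass (W.descentValue e x) (descentValue_ne_zero ha₁ ha₃ he x)) :=
  rfl

lemma descentHom_some_eq_zero_iff (ha₁ : W.a₁ = 0) (ha₃ : W.a₃ = 0) (he : W.Nonsingular e 0)
    {x y : K} (h : W.Nonsingular x y) :
    W.descentHom ha₁ ha₃ he (.some x y h) = 0 ↔ IsSquare (W.descentValue e x) := by
  rw [descentHom_some, ← ofMul_one, Additive.ofMul.apply_eq_iff_eq, squareClass_eq_one_iff]

lemma descentHom_some_eq_iff (ha₁ : W.a₁ = 0) (ha₃ : W.a₃ = 0) (he : W.Nonsingular e 0)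
    {x₁ y₁ x₂ y₂ : K} (h₁ : W.Nonsingular x₁ y₁) (h₂ : W.Nonsingular x₂ y₂) :
    W.descentHom ha₁ ha₃ he (.some x₁ y₁ h₁) = W.descentHom ha₁ ha₃ he (.some x₂ y₂ h₂) ↔
      IsSquare (W.descentValue e x₁ * W.descentValue e x₂) := by
  rw [descentHom_some, descentHom_some, Additive.ofMul.apply_eq_iff_eq,
    squareClass_eq_squareClass_iff]

lemma Y_eq_zero_of_two_nsmul_eq_zero [NeZero (2 : K)] (ha₁ : W.a₁ = 0) (ha₃ : W.a₃ = 0)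
    {x y : K} {h : W.Nonsingular x y} (h2 : 2 • Point.some x y h = 0) : y = 0 := by
  by_contra hy
  have hy' : y ≠ W.negY x y := fun hneg => hy <| by
    rw [negY, ha₁, ha₃] at hneg
    have h2y : (2 : K) * y = 0 := by linear_combination hneg
    exact (mul_eq_zero.mp h2y).resolve_left two_ne_zero
  rw [two_nsmul, Point.add_self_of_Y_ne hy'] at h2
  exact Point.some_ne_zero _ h2

lemma sq_sub_eq_of_two_nsmul_eq (ha₁ : W.a₁ = 0) (ha₃ : W.a₃ = 0) {x y : K}
    {h : W.Nonsingular x y} {he : W.Nonsingular e 0} (h2 : 2 • Point.some x y h = .some e 0 he) :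
    (x - e) ^ 2 = 3 * e ^ 2 + 2 * W.a₂ * e + W.a₄ := by
  rw [two_nsmul] at h2
  by_cases hxy : x = x ∧ y = W.negY x y
  · rw [Point.add_of_Y_eq hxy.1 hxy.2] at h2
    exact absurd h2.symm (Point.some_ne_zero he)
  · rw [Point.add_some hxy] at h2
    have hx : W.addX x x (W.slope x x y y) = e := (Point.some.inj h2).1
    have hd := cubic_deriv_eq_of_mul_sub_eq_zero ha₁ ha₃ he.1 h.1 h.1 hxy
      (by rw [hx, sub_self, mul_zero])
    rw [hx] at hd
    linear_combination -hd

end WeierstrassCurve.Affine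

-- If `addOrderOf P = 2^k m` with `m` odd, `Q = m • P` has order `2^k` and `φ Q = φ P`;
-- for `k ≥ 3`, `2^(k-2) • Q` has order 4 and lies in `2A`.
theorem addOrderOf_eq_zero_of_map_ne {A B : Type*} [AddCommGroup A] [AddCommGroup B]
    (φ : A →+ B) (hB : ∀ b : B, 2 • b = 0) {P : A} (hP : φ P ≠ 0)
    (h2 : ∀ S : A, S ≠ 0 → 2 • S = 0 → φ S ≠ φ P)
    (h4 : ∀ S : A, 2 • S ≠ 0 → 4 • S = 0 → φ S ≠ 0 ∧ φ S ≠ φ P) :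
    addOrderOf P = 0 := by
  by_contra hn
  obtain ⟨k, m, hm, hnkm⟩ := Nat.exists_eq_pow_mul_and_not_dvd hn 2 (by norm_num)
  obtain ⟨q, rfl⟩ : Odd m := Nat.odd_iff.mpr (Nat.two_dvd_ne_zero.mp hm)
  set Q := (2 * q + 1) • P
  have hφQ : φ Q = φ P := by
    rw [map_nsmul, add_nsmul, mul_nsmul', hB, zero_add, one_nsmul]
  have hφ2 : ∀ R : A, φ (2 • R) = 0 := fun R => by rw [map_nsmul, hB]
  have hzero : 2 ^ k • Q = 0 := by rw [← mul_nsmul', ← hnkm, addOrderOf_nsmul_eq_zero]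
  have hne : ∀ j < k, 2 ^ j • Q ≠ 0 := fun j hj hQ => by
    have := addOrderOf_le_of_nsmul_eq_zero (by positivity) ((mul_nsmul' P _ _).trans hQ)
    have := Nat.pow_lt_pow_right (a := 2) (by norm_num) hj
    nlinarith
  match k, hzero, hne with
  | 0, hzero, _ => exact hP (by rw [← hφQ, ← one_nsmul Q, ← pow_zero 2, hzero, map_zero])
  | 1, hzero, hne => exact h2 Q (by simpa using hne 0 one_pos) (by simpa using hzero) hφQ
  | 2, hzero, hne => exact (h4 Q (by simpa using hne 1 one_lt_two) (by simpa using hzero)).2 hφQ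
  | j + 3, hzero, hne =>
    refine (h4 (2 ^ (j + 1) • Q) ?_ ?_).1 ?_
    · rw [smul_smul, ← pow_succ']
      exact hne _ (by omega)
    · rw [smul_smul, show 4 * 2 ^ (j + 1) = 2 ^ (j + 3) by ring, hzero]
    · rw [pow_succ', mul_nsmul', hφ2]

open WeierstrassCurve.Affine

lemma E.a₁_eq_zero : E.a₁ = 0 := rfl

lemma E.a₃_eq_zero : E.a₃ = 0 := rfl

lemma E.nonsingular_1524 : E.Nonsingular 1524 0 := by
  norm_num [nonsingular_iff, equation_iff, E]

noncomputable def E.descent : E.Point →+ Additive (SquareClasses ℚ) :=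
  E.descentHom E.a₁_eq_zero E.a₃_eq_zero E.nonsingular_1524

lemma E.exists_eq_some_of_two_nsmul_eq_zero {S : E.Point} (hS : S ≠ 0) (h2 : 2 • S = 0) :
    ∃ (x : ℚ) (h : E.Nonsingular x 0), S = .some x 0 h ∧ (x = -5964 ∨ x = 1524 ∨ x = 4440) := by
  rcases S with _ | @⟨x, y, h⟩
  · exact absurd rfl hS
  obtain rfl := Y_eq_zero_of_two_nsmul_eq_zero E.a₁_eq_zero E.a₃_eq_zero h2
  have hx := (equation_iff _ _).mp h.1
  have hroots : (x + 5964) * (x - 1524) * (x - 4440) = 0 := by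
    simp only [E] at hx
    linear_combination -hx
  refine ⟨x, h, rfl, ?_⟩
  rcases mul_eq_zero.mp hroots with h12 | h3
  · rcases mul_eq_zero.mp h12 with h1 | h2
    · exact Or.inl (by linear_combination h1)
    · exact Or.inr (Or.inl (by linear_combination h2))
  · exact Or.inr (Or.inr (by linear_combination h3))

lemma E.descent_ne_zero (h : E.Nonsingular 5736 252720) : E.descent (.some _ _ h) ≠ 0 := by
  rw [E.descent, Ne, descentHom_some_eq_zero_iff]
  norm_num [descentValue]

lemma E.descent_ne_of_two_nsmul_eq_zero (h : E.Nonsingular 5736 252720) {S : E.Point}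
    (hS : S ≠ 0) (h2 : 2 • S = 0) :
    E.descent S ≠ E.descent (.some _ _ h) := by
  obtain ⟨x, hx, rfl, hroot⟩ := E.exists_eq_some_of_two_nsmul_eq_zero hS h2
  rw [E.descent, Ne, descentHom_some_eq_iff]
  rcases hroot with rfl | rfl | rfl <;> norm_num [descentValue, E]

lemma E.descent_ne_of_four_nsmul_eq_zero (h : E.Nonsingular 5736 252720) {S : E.Point}
    (h2 : 2 • S ≠ 0) (h4 : 4 • S = 0) :
    E.descent S ≠ 0 ∧ E.descent S ≠ E.descent (.some _ _ h) := by
  obtain ⟨xT, hT, hST, hroot⟩ := E.exists_eq_some_of_two_nsmul_eq_zero h2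
    (by rw [smul_smul]; exact h4)
  have hxT : xT = 4440 := by
    have hφT : E.descent (.some xT 0 hT) = 0 := by
      rw [← hST, map_nsmul, SquareClasses.two_nsmul_eq_zero]
    rw [E.descent, descentHom_some_eq_zero_iff] at hφT
    rcases hroot with rfl | rfl | rfl
    · norm_num [descentValue] at hφT
    · norm_num [descentValue, E] at hφT
    · rfl
  subst hxT
  rcases S with _ | @⟨x, y, hS⟩
  · exact absurd rfl h2
  have hx := sq_sub_eq_of_two_nsmul_eq E.a₁_eq_zero E.a₃_eq_zero hST
  have hroots : (x - 9948) * (x + 1068) = 0 := by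
    simp only [E] at hx
    linear_combination hx
  rw [E.descent, Ne, Ne, descentHom_some_eq_zero_iff, descentHom_some_eq_iff]
  rcases mul_eq_zero.mp hroots with h1 | h1
  · obtain rfl : x = 9948 := by linear_combination h1
    norm_num [descentValue]
  · obtain rfl : x = -1068 := by linear_combination h1
    norm_num [descentValue]

theorem stmt_16 (h : E.Nonsingular 5736 252720) :
    addOrderOf (Affine.Point.some _ _ h) = 0 :=
  addOrderOf_eq_zero_of_map_ne E.descent SquareClasses.two_nsmul_eq_zero (E.descent_ne_zero h)
    (fun _ => E.descent_ne_of_two_nsmul_eq_zero h)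
    (fun _ => E.descent_ne_of_four_nsmul_eq_zero h)
end
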